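/- arXiv:2212.05872 — 2 statements merged into one kernel-verified Lean document; each statement's English description precedes it below -/
import Mathlib

section
/- Let u be a reduced eigenfunction for (c, μ, λ), where (α,β) ⊆ (0,H) is a well for c with threshold c₁ and ξ² := 2(μ² − λ/c₁) > 0. Put w = u². Let [a,b] ⊆ [0,H] be an interval with either a > β or b < α, let d be the distance between the intervals (α,β) and (a,b), and let t ∈ (0,1). If a > β then w(t a + (1−t) β) ≥ (1/2) ξ² (1−t) d ∫_a^b w(y) dy; if b < α then w(t b + (1−t) α) ≥ (1/2) ξ² (1−t) d ∫_a^b w(y) dy. -/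
/-!
Multiplying `c u'' + (λ - c μ²) u = 0` by `u` and integrating gives the energy identity
`(u u')(q) - (u u')(p) = ∫_p^q u'² + (μ² - λ/c) u²`. Outside the well `μ² - λ/c ≥ κ := ξ²/2`,
so to the right of the well, using `u(H) = 0`, `-(u u')(s) ≥ κ ∫_s^H u² ≥ κ ∫_a^b u²` for
`β ≤ s ≤ a`. Hence `(u²)' ≤ -2κ ∫_a^b u²` on `[x, a]` with `x = t a + (1 - t) β`, and integrating
from `x` to `a` gives `u(x)² ≥ 2κ (a - x) ∫_a^b u²`, twice the claimed bound. The left case is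
the mirror image, using `u(0) = 0`.
-/

open Set MeasureTheory Filter

/-- `u` (with derivative `u'`) is a reduced eigenfunction for `(c, μ, lam)` on `[0,H]`. -/
def ReducedEigenfunction (H : ℝ) (c : ℝ → ℝ) (μ lam : ℝ) (u u' : ℝ → ℝ) : Prop :=
  (∀ y ∈ Set.Icc (0:ℝ) H, HasDerivWithinAt u (u' y) (Set.Icc (0:ℝ) H) y) ∧
  ContinuousOn u' (Set.Icc (0:ℝ) H) ∧
  (∀ y ∈ Set.Icc (0:ℝ) H, u' y = u' 0 - ∫ t in (0:ℝ)..y, (lam / c t - μ ^ 2) * u t) ∧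
  (∃ y ∈ Set.Icc (0:ℝ) H, u y ≠ 0) ∧
  u 0 = 0 ∧ u H = 0

open intervalIntegral

theorem intervalIntegrable_div_sub_sq_mul {H c_m lam μ : ℝ} {c u : ℝ → ℝ} (hH : 0 ≤ H)
    (hmeas : Measurable c) (hcm : 0 < c_m) (hc : ∀ y ∈ Icc 0 H, c_m ≤ c y)
    (hu : ContinuousOn u (Icc 0 H)) :
    IntervalIntegrable (fun t => (lam / c t - μ ^ 2) * u t) volume 0 H := by
  rw [intervalIntegrable_iff_integrableOn_Icc_of_le hH]
  refine hu.integrableOn_Icc.bdd_mul (c := |lam| / c_m + μ ^ 2)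
    ((hmeas.const_div lam).sub_const _).aestronglyMeasurable ?_
  filter_upwards [ae_restrict_mem measurableSet_Icc] with t ht
  have hct : 0 < c t := hcm.trans_le (hc t ht)
  calc ‖lam / c t - μ ^ 2‖ ≤ |lam / c t| + |μ ^ 2| := abs_sub _ _
    _ ≤ |lam| / c_m + μ ^ 2 := by
      rw [abs_div, abs_of_pos hct, abs_of_nonneg (sq_nonneg μ)]
      gcongr
      exact hc t ht

namespace ReducedEigenfunction

variable {H μ lam : ℝ} {c u u' : ℝ → ℝ}

theorem continuousOn (hu : ReducedEigenfunction H c μ lam u u') : ContinuousOn u (Icc 0 H) :=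
  fun y hy => (hu.1 y hy).continuousWithinAt

theorem hasDerivAt (hu : ReducedEigenfunction H c μ lam u u') {y : ℝ} (hy : y ∈ Ioo 0 H) :
    HasDerivAt u (u' y) y :=
  (hu.1 y (Ioo_subset_Icc_self hy)).hasDerivAt (Icc_mem_nhds hy.1 hy.2)

theorem absolutelyContinuousOnInterval (hu : ReducedEigenfunction H c μ lam u u') {p q : ℝ}
    (hp : p ∈ Icc 0 H) (hq : q ∈ Icc 0 H) : AbsolutelyContinuousOnInterval u p q := by
  obtain ⟨C, hC⟩ := isCompact_Icc.exists_bound_of_continuousOn hu.2.1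
  have hLip : LipschitzOnWith C.toNNReal u (Icc 0 H) :=
    (convex_Icc 0 H).lipschitzOnWith_of_nnnorm_hasDerivWithin_le hu.1 fun y hy => by
      rw [← NNReal.coe_le_coe, coe_nnnorm]
      exact (hC y hy).trans (Real.le_coe_toNNReal C)
  exact (hLip.mono (uIcc_subset_Icc hp hq)).absolutelyContinuousOnInterval

theorem mul_deriv_sub_mul_deriv_eq_integral (hu : ReducedEigenfunction H c μ lam u u')
    (hg : IntervalIntegrable (fun t => (lam / c t - μ ^ 2) * u t) volume 0 H) {p q : ℝ}
    (hp : p ∈ Icc 0 H) (hq : q ∈ Icc 0 H) :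
    u q * u' q - u p * u' p = ∫ r in p..q, (u' r ^ 2 - (lam / c r - μ ^ 2) * u r ^ 2) := by
  -- `u'` is only absolutely continuous: on `[0, H]` it is the primitive `G`, whose derivative
  -- is known almost everywhere by Lebesgue differentiation.
  set G : ℝ → ℝ := fun y => u' 0 - ∫ t in (0:ℝ)..y, (lam / c t - μ ^ 2) * u t
  have hH : 0 ≤ H := hp.1.trans hp.2
  have hsub : uIcc p q ⊆ uIcc 0 H := by rw [uIcc_of_le hH]; exact uIcc_subset_Icc hp hq
  have hGac : AbsolutelyContinuousOnInterval G p q :=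
    (LipschitzWith.const (u' 0)).lipschitzOnWith.absolutelyContinuousOnInterval.sub
      ((hg.absolutelyContinuousOnInterval_intervalIntegral left_mem_uIcc).mono hsub)
  rw [hu.2.2.1 q hq, hu.2.2.1 p hp,
    ← (hu.absolutelyContinuousOnInterval hp hq).integral_deriv_mul_eq_sub hGac]
  refine integral_congr_ae ?_
  filter_upwards [hg.ae_hasDerivAt_integral,
    measure_eq_zero_iff_ae_notMem.mp (measure_singleton H)] with x hprim hxH hx
  have hxI : x ∈ Ioo 0 H := by
    obtain ⟨hx₁, hx₂⟩ := hx
    refine ⟨(le_min hp.1 hq.1).trans_lt hx₁, (hx₂.trans (max_le hp.2 hq.2)).lt_of_ne hxH⟩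
  have hG' : deriv G x = -((lam / c x - μ ^ 2) * u x) :=
    ((hprim (hsub (uIoc_subset_uIcc hx)) 0 left_mem_uIcc).const_sub (u' 0)).deriv
  have hGx : G x = u' x := (hu.2.2.1 x (Ioo_subset_Icc_self hxI)).symm
  rw [(hu.hasDerivAt hxI).deriv, hG', hGx]
  ring

theorem hasDerivAt_sq (hu : ReducedEigenfunction H c μ lam u u') {y : ℝ} (hy : y ∈ Ioo 0 H) :
    HasDerivAt (fun s => u s ^ 2) (2 * u y * u' y) y :=
  ((hu.hasDerivAt hy).fun_pow 2).congr_deriv (by simp)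

theorem mul_integral_sq_le_mul_deriv_sub_mul_deriv (hu : ReducedEigenfunction H c μ lam u u')
    (hg : IntervalIntegrable (fun t => (lam / c t - μ ^ 2) * u t) volume 0 H) {c₁ p q : ℝ}
    (hc₁ : 0 < c₁) (hlam : 0 ≤ lam) (hp : p ∈ Icc 0 H) (hq : q ∈ Icc 0 H) (hpq : p ≤ q)
    (hc : ∀ᵐ y ∂volume.restrict (Ioo p q), c₁ ≤ c y) :
    (μ ^ 2 - lam / c₁) * ∫ r in p..q, u r ^ 2 ≤ u q * u' q - u p * u' p := by
  have hH : 0 ≤ H := hp.1.trans hp.2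
  have hsub : uIcc p q ⊆ Icc 0 H := uIcc_subset_Icc hp hq
  have hu2 : IntervalIntegrable (fun r => u r ^ 2) volume p q :=
    ((hu.continuousOn.pow 2).mono hsub).intervalIntegrable
  have hgu : IntervalIntegrable (fun r => (lam / c r - μ ^ 2) * u r ^ 2) volume p q := by
    simpa only [mul_assoc, sq] using
      (hg.mono_set (by rwa [uIcc_of_le hH])).mul_continuousOn (hu.continuousOn.mono hsub)
  rw [hu.mul_deriv_sub_mul_deriv_eq_integral hg hp hq, ← intervalIntegral.integral_const_mul]
  rw [Measure.restrict_congr_set Ioo_ae_eq_Icc] at hc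
  refine integral_mono_ae_restrict hpq (hu2.const_mul _)
    ((((hu.2.1.pow 2).mono hsub).intervalIntegrable).sub hgu) ?_
  filter_upwards [hc] with r hr
  have hdiv : lam / c r ≤ lam / c₁ := div_le_div_of_nonneg_left hlam hc₁ hr
  nlinarith [sq_nonneg (u' r), mul_le_mul_of_nonneg_right hdiv (sq_nonneg (u r))]

theorem two_mul_integral_sq_le_sq_of_right (hu : ReducedEigenfunction H c μ lam u u')
    (hg : IntervalIntegrable (fun t => (lam / c t - μ ^ 2) * u t) volume 0 H) {c₁ x a b : ℝ}
    (hc₁ : 0 < c₁) (hlam : 0 ≤ lam) (hκ : 0 ≤ μ ^ 2 - lam / c₁)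
    (hx : 0 ≤ x) (hxa : x ≤ a) (hab : a ≤ b) (hb : b ≤ H)
    (hc : ∀ᵐ y ∂volume.restrict (Ioo x H), c₁ ≤ c y) :
    2 * (μ ^ 2 - lam / c₁) * (a - x) * ∫ y in a..b, u y ^ 2 ≤ u x ^ 2 := by
  set K := ∫ y in a..b, u y ^ 2
  have hmem : Icc x a ⊆ Icc 0 H := Icc_subset_Icc hx (hab.trans hb)
  have hH : H ∈ Icc 0 H := ⟨hx.trans (hxa.trans (hab.trans hb)), le_rfl⟩
  have hbound : ∀ s ∈ Icc x a, (μ ^ 2 - lam / c₁) * K ≤ -(u s * u' s) := by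
    intro s hs
    have hK : K ≤ ∫ y in s..H, u y ^ 2 :=
      integral_mono_interval hs.2 hab hb (ae_of_all _ fun _ => sq_nonneg _)
        ((hu.continuousOn.pow 2).mono (uIcc_subset_Icc (hmem hs) hH)).intervalIntegrable
    have hE := hu.mul_integral_sq_le_mul_deriv_sub_mul_deriv hg hc₁ hlam (hmem hs) hH
      (hmem hs).2 (ae_restrict_of_ae_restrict_of_subset (Ioo_subset_Ioo_left hs.1) hc)
    have huH : u H = 0 := hu.2.2.2.2.2
    rw [huH, zero_mul, zero_sub] at hE
    nlinarith [mul_le_mul_of_nonneg_left hK hκ]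
  have hderiv : ∀ s ∈ interior (Icc x a), HasDerivAt (fun s => u s ^ 2) (2 * u s * u' s) s := by
    rw [interior_Icc]
    exact fun s hs => hu.hasDerivAt_sq ⟨hx.trans_lt hs.1, hs.2.trans_le (hab.trans hb)⟩
  have hmvt := (convex_Icc x a).image_sub_le_mul_sub_of_deriv_le (f := fun s => u s ^ 2)
    ((hu.continuousOn.pow 2).mono hmem)
    (fun s hs => (hderiv s hs).differentiableAt.differentiableWithinAt)
    (C := -(2 * (μ ^ 2 - lam / c₁) * K))
    (fun s hs => by
      rw [(hderiv s hs).deriv]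
      linarith [hbound s (interior_subset hs)])
    x ⟨le_rfl, hxa⟩ a ⟨hxa, le_rfl⟩ hxa
  linarith [sq_nonneg (u a)]

theorem two_mul_integral_sq_le_sq_of_left (hu : ReducedEigenfunction H c μ lam u u')
    (hg : IntervalIntegrable (fun t => (lam / c t - μ ^ 2) * u t) volume 0 H) {c₁ x a b : ℝ}
    (hc₁ : 0 < c₁) (hlam : 0 ≤ lam) (hκ : 0 ≤ μ ^ 2 - lam / c₁)
    (ha : 0 ≤ a) (hab : a ≤ b) (hbx : b ≤ x) (hx : x ≤ H)
    (hc : ∀ᵐ y ∂volume.restrict (Ioo 0 x), c₁ ≤ c y) :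
    2 * (μ ^ 2 - lam / c₁) * (x - b) * ∫ y in a..b, u y ^ 2 ≤ u x ^ 2 := by
  set K := ∫ y in a..b, u y ^ 2
  have hmem : Icc b x ⊆ Icc 0 H := Icc_subset_Icc (ha.trans hab) hx
  have h₀ : (0 : ℝ) ∈ Icc 0 H := ⟨le_rfl, ha.trans (hab.trans (hbx.trans hx))⟩
  have hbound : ∀ s ∈ Icc b x, (μ ^ 2 - lam / c₁) * K ≤ u s * u' s := by
    intro s hs
    have hK : K ≤ ∫ y in (0 : ℝ)..s, u y ^ 2 :=
      integral_mono_interval ha hab hs.1 (ae_of_all _ fun _ => sq_nonneg _)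
        ((hu.continuousOn.pow 2).mono (uIcc_subset_Icc h₀ (hmem hs))).intervalIntegrable
    have hE := hu.mul_integral_sq_le_mul_deriv_sub_mul_deriv hg hc₁ hlam h₀ (hmem hs)
      (hmem hs).1 (ae_restrict_of_ae_restrict_of_subset (Ioo_subset_Ioo_right hs.2) hc)
    have hu0 : u 0 = 0 := hu.2.2.2.2.1
    rw [hu0, zero_mul, sub_zero] at hE
    nlinarith [mul_le_mul_of_nonneg_left hK hκ]
  have hderiv : ∀ s ∈ interior (Icc b x), HasDerivAt (fun s => u s ^ 2) (2 * u s * u' s) s := by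
    rw [interior_Icc]
    exact fun s hs => hu.hasDerivAt_sq ⟨(ha.trans hab).trans_lt hs.1, hs.2.trans_le hx⟩
  have hmvt := (convex_Icc b x).mul_sub_le_image_sub_of_le_deriv (f := fun s => u s ^ 2)
    ((hu.continuousOn.pow 2).mono hmem)
    (fun s hs => (hderiv s hs).differentiableAt.differentiableWithinAt)
    (C := 2 * (μ ^ 2 - lam / c₁) * K)
    (fun s hs => by
      rw [(hderiv s hs).deriv]
      linarith [hbound s (interior_subset hs)])
    b ⟨le_rfl, hbx⟩ x ⟨hbx, le_rfl⟩ hbx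
  linarith [sq_nonneg (u b)]

end ReducedEigenfunction

theorem stmt1_general
    (H c_m c_M c₁ α β μ lam a b : ℝ) (c u u' : ℝ → ℝ)
    (hcm : 0 < c_m)
    (hmeas : Measurable c)
    (hbounds : ∀ y ∈ Set.Icc (0:ℝ) H, c_m ≤ c y ∧ c y ≤ c_M)
    (hc₁m : c_m < c₁)
    (hα : 0 ≤ α) (hαβ : α < β) (hβ : β ≤ H)
    (hwell : ∀ᵐ y ∂(MeasureTheory.volume.restrict (Set.Ioo (0:ℝ) H \ Set.Ioo α β)),
      c₁ ≤ c y)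
    (hlam : 0 < lam)
    (hξ : 0 < 2 * (μ ^ 2 - lam / c₁))
    (ha : 0 ≤ a) (hab : a ≤ b) (hb : b ≤ H)
    (hu : ReducedEigenfunction H c μ lam u u') :
    ∀ t ∈ Set.Ioo (0:ℝ) 1,
      (β < a →
        (1 / 2) * (2 * (μ ^ 2 - lam / c₁)) * (1 - t) * (a - β) * (∫ y in a..b, (u y) ^ 2)
          ≤ (u (t * a + (1 - t) * β)) ^ 2) ∧
      (b < α →
        (1 / 2) * (2 * (μ ^ 2 - lam / c₁)) * (1 - t) * (α - b) * (∫ y in a..b, (u y) ^ 2)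
          ≤ (u (t * b + (1 - t) * α)) ^ 2) := by
  rintro t ⟨ht₀, ht₁⟩
  have hc₁ : 0 < c₁ := hcm.trans hc₁m
  have hκ : 0 ≤ μ ^ 2 - lam / c₁ := by linarith
  have hK : 0 ≤ ∫ y in a..b, u y ^ 2 := integral_nonneg hab fun _ _ => sq_nonneg _
  have hg : IntervalIntegrable (fun t => (lam / c t - μ ^ 2) * u t) volume 0 H :=
    intervalIntegrable_div_sub_sq_mul (ha.trans (hab.trans hb)) hmeas hcm
      (fun y hy => (hbounds y hy).1) hu.continuousOn
  constructor
  · intro hβa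
    have hout : Ioo (t * a + (1 - t) * β) H ⊆ Ioo 0 H \ Ioo α β := fun y hy =>
      ⟨⟨by nlinarith [hy.1], hy.2⟩, fun h => by nlinarith [h.2, hy.1]⟩
    have hright := hu.two_mul_integral_sq_le_sq_of_right hg hc₁ hlam.le hκ (by nlinarith)
      (by nlinarith) hab hb (ae_restrict_of_ae_restrict_of_subset hout hwell)
    rw [show a - (t * a + (1 - t) * β) = (1 - t) * (a - β) by ring] at hright
    nlinarith [mul_nonneg (mul_nonneg hκ (sub_nonneg.2 ht₁.le))
      (mul_nonneg (sub_nonneg.2 hβa.le) hK)]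
  · intro hbα
    have hout : Ioo 0 (t * b + (1 - t) * α) ⊆ Ioo 0 H \ Ioo α β := fun y hy =>
      ⟨⟨hy.1, by nlinarith [hy.2]⟩, fun h => by nlinarith [h.1, hy.2]⟩
    have hleft := hu.two_mul_integral_sq_le_sq_of_left hg hc₁ hlam.le hκ ha hab (by nlinarith)
      (by nlinarith) (ae_restrict_of_ae_restrict_of_subset hout hwell)
    rw [show t * b + (1 - t) * α - b = (1 - t) * (α - b) by ring] at hleft
    nlinarith [mul_nonneg (mul_nonneg hκ (sub_nonneg.2 ht₁.le))
      (mul_nonneg (sub_nonneg.2 hbα.le) hK)]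

theorem stmt1
    (H c_m c_M c₁ α β μ lam a b : ℝ) (c u u' : ℝ → ℝ)
    (hH : 0 < H) (hcm : 0 < c_m) (hcmM : c_m ≤ c_M)
    (hmeas : Measurable c)
    (hbounds : ∀ y ∈ Set.Icc (0:ℝ) H, c_m ≤ c y ∧ c y ≤ c_M)
    (hc₁m : c_m < c₁) (hc₁M : c₁ ≤ c_M)
    (hα : 0 ≤ α) (hαβ : α < β) (hβ : β ≤ H)
    (hwell : ∀ᵐ y ∂(MeasureTheory.volume.restrict (Set.Ioo (0:ℝ) H \ Set.Ioo α β)),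
      c₁ ≤ c y)
    (hμ : 0 < μ) (hlam : 0 < lam)
    (hξ : 0 < 2 * (μ ^ 2 - lam / c₁))
    (ha : 0 ≤ a) (hab : a ≤ b) (hb : b ≤ H)
    (hu : ReducedEigenfunction H c μ lam u u') :
    ∀ t ∈ Set.Ioo (0:ℝ) 1,
      (β < a →
        (1 / 2) * (2 * (μ ^ 2 - lam / c₁)) * (1 - t) * (a - β) * (∫ y in a..b, (u y) ^ 2)
          ≤ (u (t * a + (1 - t) * β)) ^ 2) ∧
      (b < α →
        (1 / 2) * (2 * (μ ^ 2 - lam / c₁)) * (1 - t) * (α - b) * (∫ y in a..b, (u y) ^ 2)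
          ≤ (u (t * b + (1 - t) * α)) ^ 2) :=
  stmt1_general H c_m c_M c₁ α β μ lam a b c u u' hcm hmeas hbounds hc₁m hα hαβ hβ hwell hlam hξ ha
    hab hb hu
end

section
/- Fix ε > 0 and constants 0 < c_m ≤ c_M. There exists a constant 𝔠 ≥ 1 depending only on ε, c_m, c_M with the following property: for every H > 0, every nondecreasing diffusion coefficient c : [0,H] → ℝ with c_m ≤ c(y) ≤ c_M, every μ > 0 and λ satisfying both λ ≥ (c_M + ε) μ² and λ/c_M − μ² > 1, every reduced eigenfunction u for (c, μ, λ), and all y₁ < y₂ in [0,H] with u'(y₁) = u'(y₂) = 0, one has u(y₁)² ≤ u(y₂)² ≤ 𝔠 · u(y₁)². In particular the successive extremal amplitudes of u are nondecreasing from 0 to H and their ratios are uniformly bounded. -/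
/-!
With `q = λ / c - μ²`, positive and nonincreasing because `c` is nondecreasing, the equation is
`u'' = -q u`. Formally `(u²)' = (1/q) · (-(u'²)')` and `(q u² + u'²)' = q' u²`. Since `c` may jump,
these are used through integration by parts against the Stieltjes measure of a monotone weight:
against `1/q`, with `u'² ≥ 0` vanishing at `y₁` and `y₂`, it gives `u(y₁)² ≤ u(y₂)²`; against `-q`,
with `u² ≥ 0`, it gives `q(y₂) u(y₂)² ≤ q(y₁) u(y₁)²`. The bounds
`λ ε / (c_M (c_M + ε)) ≤ q ≤ λ / c_m` turn the latter into the ratio bound.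
-/

open Set MeasureTheory Filter

theorem integral_measureReal_Iic_mul {μ ν : Measure ℝ} [SFinite μ] [IsFiniteMeasure ν]
    {g : ℝ → ℝ} (hg : Integrable g μ) :
    ∫ t, ν.real (Iic t) * g t ∂μ = ∫ x, ∫ t in Ici x, g t ∂μ ∂ν := by
  set K : ℝ × ℝ → ℝ := {p | p.2 ≤ p.1}.indicator fun p => g p.1
  have hK : Integrable K (μ.prod ν) :=
    (hg.comp_fst ν).indicator (measurableSet_le measurable_snd measurable_fst)
  calc ∫ t, ν.real (Iic t) * g t ∂μ = ∫ t, ∫ x, K (t, x) ∂ν ∂μ := by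
        congr 1 with t
        rw [← smul_eq_mul, ← integral_indicator_const _ measurableSet_Iic]
        rfl
    _ = ∫ x, ∫ t, K (t, x) ∂μ ∂ν := integral_integral_swap hK
    _ = ∫ x, ∫ t in Ici x, g t ∂μ ∂ν := by
        congr 1 with x
        rw [← integral_indicator measurableSet_Ici]
        rfl

theorem continuousOn_of_eq_add_integral {a b : ℝ} {w f : ℝ → ℝ}
    (hf : IntervalIntegrable f volume a b) (hw : ∀ t ∈ Icc a b, w t = w a + ∫ s in a..t, f s) :
    ContinuousOn w (Icc a b) := by
  rcases le_or_gt a b with hab | hab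
  · have hprim := intervalIntegral.continuousOn_primitive_interval' hf left_mem_uIcc
    rw [uIcc_of_le hab] at hprim
    exact (continuousOn_const.add hprim).congr hw
  · simp [Icc_eq_empty_of_lt hab]

theorem Monotone.ae_eq_rightLim {m : ℝ → ℝ} (hm : Monotone m) :
    ∀ᵐ x, m x = Function.rightLim m x := by
  have hcont : ∀ᵐ x, ContinuousAt m x := by
    rw [ae_iff]; exact hm.countable_not_continuousAt.measure_zero _
  filter_upwards [hcont] with x hx
  exact (hm.continuousWithinAt_Ioi_iff_rightLim_eq.1 hx.continuousWithinAt).symm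

theorem Monotone.integral_mul_eq_sub_integral_stieltjes {a b : ℝ} (hab : a ≤ b) {m g F : ℝ → ℝ}
    (hm : Monotone m) (hg : IntervalIntegrable g volume a b)
    (hF : ∀ t ∈ Icc a b, F t = F a + ∫ s in a..t, g s) :
    ∫ t in a..b, m t * g t = Function.rightLim m b * F b - Function.rightLim m a * F a -
      ∫ t in Ioc a b, F t ∂hm.stieltjesFunction.measure := by
  set s := hm.stieltjesFunction
  have hs : ∀ x, s x = Function.rightLim m x := hm.stieltjesFunction_eq
  set ν := s.measure.restrict (Ioc a b)
  have hν : ν.real univ = s b - s a := by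
    rw [measureReal_restrict_apply_univ, measureReal_def, s.measure_Ioc,
      ENNReal.toReal_ofReal (sub_nonneg.2 (s.mono hab))]
  have : IsFiniteMeasure ν := ⟨by simp [ν, s.measure_Ioc]⟩
  have hgI : IntegrableOn g (Ioc a b) := (intervalIntegrable_iff_integrableOn_Ioc_of_le hab).1 hg
  have hFν : IntegrableOn F (Ioc a b) s.measure :=
    (continuousOn_of_eq_add_integral hg hF).integrableOn_Icc.mono_set Ioc_subset_Icc_self
  -- Writing `s t - s a = ν (Iic t)`, the correction term is a Fubini swap over `a < x ≤ t ≤ b`.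
  have hdist : ∀ t ∈ Ioc a b, ν.real (Iic t) = s t - s a := by
    intro t ht
    rw [measureReal_restrict_apply measurableSet_Iic, Iic_inter_Ioc_of_le ht.2, measureReal_def,
      s.measure_Ioc, ENNReal.toReal_ofReal (sub_nonneg.2 (s.mono ht.1.le))]
  have htail : ∀ x ∈ Ioc a b, ∫ t in Ici x, g t ∂(volume.restrict (Ioc a b)) = F b - F x := by
    intro x hx
    have hIcc : Ici x ∩ Ioc a b = Icc x b := by
      ext t; simp only [mem_inter_iff, mem_Ici, mem_Ioc, mem_Icc]
      exact ⟨fun h => ⟨h.1, h.2.2⟩, fun h => ⟨h.1, hx.1.trans_le h.1, h.2⟩⟩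
    rw [Measure.restrict_restrict measurableSet_Ici, hIcc, integral_Icc_eq_integral_Ioc,
      ← intervalIntegral.integral_of_le hx.2, hF b (right_mem_Icc.2 hab),
      hF x (Ioc_subset_Icc_self hx),
      ← intervalIntegral.integral_interval_sub_left (hg.mono_set ?_) (hg.mono_set ?_)]
    · ring
    · exact uIcc_subset_uIcc left_mem_uIcc right_mem_uIcc
    · exact uIcc_subset_uIcc left_mem_uIcc (Icc_subset_uIcc (Ioc_subset_Icc_self hx))
  calc ∫ t in a..b, m t * g t = ∫ t in Ioc a b, s t * g t := by
        rw [intervalIntegral.integral_of_le hab]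
        refine integral_congr_ae (ae_restrict_of_ae ?_)
        filter_upwards [hm.ae_eq_rightLim] with t ht
        rw [ht, hs]
    _ = ∫ t in Ioc a b, (s a * g t + ν.real (Iic t) * g t) := by
        refine setIntegral_congr_fun measurableSet_Ioc fun t ht => ?_
        rw [hdist t ht]; ring
    _ = s a * (F b - F a) + ∫ x, (F b - F x) ∂ν := by
        have hmono : Monotone fun t => ν.real (Iic t) := fun x y hxy =>
          measureReal_mono (Iic_subset_Iic.2 hxy)
        have hbdd : ∀ t, ‖ν.real (Iic t)‖ ≤ ν.real univ := fun t => by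
          rw [Real.norm_of_nonneg measureReal_nonneg]; exact measureReal_mono (subset_univ _)
        rw [integral_add (hgI.const_mul _)
            (hgI.bdd_mul hmono.measurable.aestronglyMeasurable (Eventually.of_forall hbdd)),
          integral_const_mul,
          integral_measureReal_Iic_mul hgI, setIntegral_congr_fun measurableSet_Ioc htail,
          ← intervalIntegral.integral_of_le hab, hF b (right_mem_Icc.2 hab), add_sub_cancel_left]
    _ = _ := by
        rw [integral_sub (integrable_const _) hFν, integral_const, smul_eq_mul, hν, hs, hs]
        ring

theorem integral_mul_le_of_monotoneOn {a b : ℝ} (hab : a ≤ b) {m g F : ℝ → ℝ}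
    (hm : MonotoneOn m (Icc a b)) (hg : IntervalIntegrable g volume a b)
    (hF : ∀ t ∈ Icc a b, F t = F a + ∫ s in a..t, g s) (hF0 : ∀ t ∈ Icc a b, 0 ≤ F t) :
    ∫ t in a..b, m t * g t ≤ m b * F b - m a * F a := by
  -- Extending `m` by constants outside `[a, b]` makes its right limit at `b` equal to `m b`.
  set m' := IccExtend hab (m ∘ Subtype.val)
  have hm' : Monotone m' := hm.monotone.IccExtend hab
  have hm'm : ∀ t ∈ Icc a b, m' t = m t := fun t ht => IccExtend_of_mem hab _ ht
  have hright : Function.rightLim m' b = m b := by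
    have hconst : ContinuousWithinAt m' (Ici b) b :=
      continuousWithinAt_const.congr (fun y hy => IccExtend_of_right_le hab _ hy)
        (IccExtend_of_right_le hab _ le_rfl)
    rw [hconst.rightLim_eq, hm'm b (right_mem_Icc.2 hab)]
  have hleft : m a ≤ Function.rightLim m' a :=
    hm'm a (left_mem_Icc.2 hab) ▸ hm'.le_rightLim le_rfl
  have hFν : 0 ≤ ∫ t in Ioc a b, F t ∂hm'.stieltjesFunction.measure :=
    setIntegral_nonneg measurableSet_Ioc fun t ht => hF0 t (Ioc_subset_Icc_self ht)
  have hFa : m a * F a ≤ Function.rightLim m' a * F a :=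
    mul_le_mul_of_nonneg_right hleft (hF0 a (left_mem_Icc.2 hab))
  have hIBP := hm'.integral_mul_eq_sub_integral_stieltjes hab hg hF
  have hmm' : ∫ t in a..b, m t * g t = ∫ t in a..b, m' t * g t :=
    intervalIntegral.integral_congr fun t ht => by
      rw [hm'm t (uIcc_of_le hab ▸ ht)]
  rw [hright] at hIBP
  linarith

theorem sq_eq_sq_add_integral {a b : ℝ} {w f : ℝ → ℝ} (hf : IntervalIntegrable f volume a b)
    (hw : ∀ t ∈ Icc a b, w t = w a + ∫ s in a..t, f s) :
    ∀ t ∈ Icc a b, w t ^ 2 = w a ^ 2 + ∫ s in a..t, 2 * w s * f s := by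
  intro t ht
  have hsub : uIcc a t ⊆ Icc a b := by
    rw [uIcc_of_le ht.1]; exact Icc_subset_Icc_right ht.2
  have hft : IntervalIntegrable f volume a t :=
    hf.mono_set (by rw [uIcc_of_le (ht.1.trans ht.2)]; exact hsub)
  set W : ℝ → ℝ := fun x => w a + ∫ s in a..x, f s
  have hW : AbsolutelyContinuousOnInterval W a t :=
    contDiffOn_const.absolutelyContinuousOnInterval.add
      (hft.absolutelyContinuousOnInterval_intervalIntegral left_mem_uIcc)
  have hderiv : ∀ᵐ x, x ∈ uIoc a t →
      deriv W x * W x + W x * deriv W x = 2 * w x * f x := by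
    filter_upwards [hft.ae_hasDerivAt_integral] with x hx hxI
    have hxI' : x ∈ uIcc a t := uIoc_subset_uIcc hxI
    rw [((hx hxI' a left_mem_uIcc).const_add (w a)).deriv, hw x (hsub hxI')]
    ring
  have key := hW.integral_deriv_mul_eq_sub hW
  rw [intervalIntegral.integral_congr_ae hderiv] at key
  simp only [W, intervalIntegral.integral_same, add_zero, ← hw t ht] at key
  linarith

theorem eq_add_integral_of_hasDerivWithinAt {a b : ℝ} {u u' : ℝ → ℝ}
    (hu : ∀ y ∈ Icc a b, HasDerivWithinAt u (u' y) (Icc a b) y) (hu' : ContinuousOn u' (Icc a b)) :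
    ∀ t ∈ Icc a b, u t = u a + ∫ s in a..t, u' s := by
  intro t ht
  have hsub : Icc a t ⊆ Icc a b := Icc_subset_Icc_right ht.2
  rw [intervalIntegral.integral_eq_sub_of_hasDerivAt_of_le ht.1
    (fun y hy => (hu y (hsub hy)).continuousWithinAt.mono hsub)
    (fun y hy => (hu y (hsub (Ioo_subset_Icc_self hy))).hasDerivAt
      (Icc_mem_nhds hy.1 (hy.2.trans_le ht.2)))
    ((hu'.mono hsub).intervalIntegrable_of_Icc ht.1)]
  ring

theorem AntitoneOn.intervalIntegrable_mul {a b : ℝ} {q u : ℝ → ℝ} (hab : a ≤ b)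
    (hq : AntitoneOn q (Icc a b)) (hu : ContinuousOn u (Icc a b)) :
    IntervalIntegrable (fun t => q t * u t) volume a b := by
  rw [← uIcc_of_le hab] at hq hu
  exact hq.intervalIntegrable.mul_continuousOn hu

theorem sq_le_sq_of_antitoneOn {a b : ℝ} {q u u' : ℝ → ℝ} (hab : a ≤ b)
    (hq : AntitoneOn q (Icc a b)) (hq0 : ∀ t ∈ Icc a b, 0 < q t)
    (hu' : IntervalIntegrable u' volume a b) (hu : ∀ t ∈ Icc a b, u t = u a + ∫ s in a..t, u' s)
    (hu'eq : ∀ t ∈ Icc a b, u' t = u' a + ∫ s in a..t, -(q s * u s))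
    (ha : u' a = 0) (hb : u' b = 0) :
    u a ^ 2 ≤ u b ^ 2 := by
  have hqu : IntervalIntegrable (fun t => -(q t * u t)) volume a b :=
    (hq.intervalIntegrable_mul hab (continuousOn_of_eq_add_integral hu' hu)).neg
  have hu'c := continuousOn_of_eq_add_integral hqu hu'eq
  have hg : IntervalIntegrable (fun t => 2 * u' t * -(q t * u t)) volume a b :=
    hqu.continuousOn_mul (continuousOn_const.mul (uIcc_of_le hab ▸ hu'c))
  have key := integral_mul_le_of_monotoneOn hab
    (fun x hx y hy hxy => inv_anti₀ (hq0 y hy) (hq hx hy hxy)) hg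
    (sq_eq_sq_add_integral hqu hu'eq) (fun t _ => sq_nonneg (u' t))
  have hcancel :
      ∫ t in a..b, (q t)⁻¹ * (2 * u' t * -(q t * u t)) = -∫ t in a..b, 2 * u t * u' t := by
    rw [← intervalIntegral.integral_neg]
    refine intervalIntegral.integral_congr fun t ht => ?_
    have := (hq0 t (uIcc_of_le hab ▸ ht)).ne'
    field_simp
  have hu2 := sq_eq_sq_add_integral hu' hu b (right_mem_Icc.2 hab)
  rw [hcancel, ha, hb] at key
  linarith

theorem mul_sq_le_mul_sq_of_antitoneOn {a b : ℝ} {q u u' : ℝ → ℝ} (hab : a ≤ b)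
    (hq : AntitoneOn q (Icc a b))
    (hu' : IntervalIntegrable u' volume a b) (hu : ∀ t ∈ Icc a b, u t = u a + ∫ s in a..t, u' s)
    (hu'eq : ∀ t ∈ Icc a b, u' t = u' a + ∫ s in a..t, -(q s * u s))
    (ha : u' a = 0) (hb : u' b = 0) :
    q b * u b ^ 2 ≤ q a * u a ^ 2 := by
  have huc := continuousOn_of_eq_add_integral hu' hu
  have hqu : IntervalIntegrable (fun t => -(q t * u t)) volume a b :=
    (hq.intervalIntegrable_mul hab huc).neg
  have hg : IntervalIntegrable (fun t => 2 * u t * u' t) volume a b :=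
    hu'.continuousOn_mul (continuousOn_const.mul (uIcc_of_le hab ▸ huc))
  have key := integral_mul_le_of_monotoneOn (m := fun t => -q t) hab
    (fun x hx y hy hxy => neg_le_neg (hq hx hy hxy)) hg
    (sq_eq_sq_add_integral hu' hu) (fun t _ => sq_nonneg (u t))
  have hu'2 := sq_eq_sq_add_integral hqu hu'eq b (right_mem_Icc.2 hab)
  have hcancel : ∫ t in a..b, -q t * (2 * u t * u' t) = ∫ t in a..b, 2 * u' t * -(q t * u t) := by
    congr 1 with t; ring
  rw [hcancel] at key
  rw [ha, hb] at hu'2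
  linarith

theorem MonotoneOn.antitoneOn_div_sub {s : Set ℝ} {c : ℝ → ℝ} {lam : ℝ} (κ : ℝ)
    (hc : MonotoneOn c s) (hc0 : ∀ t ∈ s, 0 < c t) (hlam : 0 ≤ lam) :
    AntitoneOn (fun t => lam / c t - κ) s := fun x hx _ hy hxy =>
  sub_le_sub_right (div_le_div_of_nonneg_left hlam (hc0 x hx) (hc hx hy hxy)) κ

theorem le_mul_of_div_sub_sq_mul_le {c_m c_M ε μ lam c₁ c₂ v₁ v₂ : ℝ} (hcm : 0 < c_m)
    (hε : 0 < ε) (hlam : (c_M + ε) * μ ^ 2 ≤ lam) (hlam0 : 0 < lam) (hc₁ : c_m ≤ c₁)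
    (hc₂ : 0 < c₂) (hc₂M : c₂ ≤ c_M) (hv₁ : 0 ≤ v₁) (hv₂ : 0 ≤ v₂)
    (h : (lam / c₂ - μ ^ 2) * v₂ ≤ (lam / c₁ - μ ^ 2) * v₁) :
    v₂ ≤ c_M * (c_M + ε) / (c_m * ε) * v₁ := by
  have hcM : 0 < c_M := hc₂.trans_le hc₂M
  have hL : lam * ε / (c_M * (c_M + ε)) ≤ lam / c₂ - μ ^ 2 := by
    have hμ : μ ^ 2 ≤ lam / (c_M + ε) := by rw [le_div_iff₀ (by positivity)]; linarith
    have hgap : lam / c_M - lam / (c_M + ε) = lam * ε / (c_M * (c_M + ε)) := by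
      field_simp; ring
    have := div_le_div_of_nonneg_left hlam0.le hc₂ hc₂M
    linarith
  have hU : lam / c₁ - μ ^ 2 ≤ lam / c_m := by
    have := div_le_div_of_nonneg_left hlam0.le hcm hc₁
    nlinarith [sq_nonneg μ]
  have key : lam * ε / (c_M * (c_M + ε)) * v₂ ≤ lam / c_m * v₁ :=
    calc lam * ε / (c_M * (c_M + ε)) * v₂ ≤ (lam / c₂ - μ ^ 2) * v₂ := by gcongr
      _ ≤ (lam / c₁ - μ ^ 2) * v₁ := h
      _ ≤ lam / c_m * v₁ := by gcongr
  calc v₂ = (lam * ε / (c_M * (c_M + ε)) * v₂) / (lam * ε / (c_M * (c_M + ε))) := by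
        field_simp
    _ ≤ (lam / c_m * v₁) / (lam * ε / (c_M * (c_M + ε))) := by gcongr
    _ = c_M * (c_M + ε) / (c_m * ε) * v₁ := by field_simp

theorem ReducedEigenfunction.deriv_eq_add_integral {H : ℝ} {c : ℝ → ℝ} {μ lam : ℝ}
    {u u' : ℝ → ℝ} (hu : ReducedEigenfunction H c μ lam u u')
    (hqu : IntervalIntegrable (fun t => (lam / c t - μ ^ 2) * u t) volume 0 H)
    {a : ℝ} (ha : a ∈ Icc 0 H) :
    ∀ t ∈ Icc a H, u' t = u' a + ∫ s in a..t, -((lam / c s - μ ^ 2) * u s) := by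
  intro t ht
  have htH : t ∈ Icc 0 H := ⟨ha.1.trans ht.1, ht.2⟩
  have hsplit := intervalIntegral.integral_add_adjacent_intervals
    (hqu.mono_set (uIcc_subset_uIcc left_mem_uIcc (Icc_subset_uIcc ha)))
    (hqu.mono_set (uIcc_subset_uIcc (Icc_subset_uIcc ha) (Icc_subset_uIcc htH)))
  rw [hu.2.2.1 t htH, hu.2.2.1 a ha, intervalIntegral.integral_neg, ← hsplit]
  ring

/-- For nondecreasing coefficients the successive extremal amplitudes are nondecreasing
and their ratios are bounded by a constant depending only on `ε, c_m, c_M`. -/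
theorem stmt11
    (ε c_m c_M : ℝ) (hε : 0 < ε) (hcm : 0 < c_m) (hcmM : c_m ≤ c_M) :
    ∃ C : ℝ, 1 ≤ C ∧
      ∀ (H : ℝ) (c u u' : ℝ → ℝ) (μ lam : ℝ),
        0 < H →
        Measurable c → (∀ y ∈ Set.Icc (0:ℝ) H, c_m ≤ c y ∧ c y ≤ c_M) →
        MonotoneOn c (Set.Icc (0:ℝ) H) →
        0 < μ → (c_M + ε) * μ ^ 2 ≤ lam → 1 < lam / c_M - μ ^ 2 →
        ReducedEigenfunction H c μ lam u u' →
        ∀ y₁ ∈ Set.Icc (0:ℝ) H, ∀ y₂ ∈ Set.Icc (0:ℝ) H,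
          y₁ < y₂ → u' y₁ = 0 → u' y₂ = 0 →
          (u y₁) ^ 2 ≤ (u y₂) ^ 2 ∧ (u y₂) ^ 2 ≤ C * (u y₁) ^ 2 := by
  have hcM : 0 < c_M := hcm.trans_le hcmM
  refine ⟨c_M * (c_M + ε) / (c_m * ε), ?_, ?_⟩
  · rw [one_le_div (by positivity)]
    nlinarith
  intro H c u u' μ lam hH _ hc hc_mono _ hlam hlam' hu y₁ hy₁ y₂ hy₂ hy hu'₁ hu'₂
  have hlam0 : 0 < lam := by
    have : 0 < lam / c_M := by nlinarith [sq_nonneg μ]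
    exact (div_pos_iff_of_pos_right hcM).1 this
  have hc0 : ∀ t ∈ Icc 0 H, 0 < c t := fun t ht => hcm.trans_le (hc t ht).1
  have hq := hc_mono.antitoneOn_div_sub (μ ^ 2) hc0 hlam0.le
  have hsub : Icc y₁ y₂ ⊆ Icc 0 H := Icc_subset_Icc hy₁.1 hy₂.2
  have hq0 : ∀ t ∈ Icc y₁ y₂, 0 < lam / c t - μ ^ 2 := fun t ht => by
    have := div_le_div_of_nonneg_left hlam0.le (hc0 t (hsub ht)) (hc t (hsub ht)).2
    linarith
  have hu_rep := eq_add_integral_of_hasDerivWithinAt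
    (fun y hy => (hu.1 y (hsub hy)).mono hsub) (hu.2.1.mono hsub)
  have hqu := hq.intervalIntegrable_mul hH.le fun y hy => (hu.1 y hy).continuousWithinAt
  have hu'_rep : ∀ t ∈ Icc y₁ y₂, u' t = u' y₁ + ∫ s in y₁..t, -((lam / c s - μ ^ 2) * u s) :=
    fun t ht => hu.deriv_eq_add_integral hqu hy₁ t ⟨ht.1, ht.2.trans hy₂.2⟩
  have hu' : IntervalIntegrable u' volume y₁ y₂ :=
    (hu.2.1.mono hsub).intervalIntegrable_of_Icc hy.le
  refine ⟨sq_le_sq_of_antitoneOn hy.le (hq.mono hsub) hq0 hu' hu_rep hu'_rep hu'₁ hu'₂, ?_⟩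
  exact le_mul_of_div_sub_sq_mul_le hcm hε hlam hlam0 (hc y₁ hy₁).1 (hc0 y₂ hy₂) (hc y₂ hy₂).2
    (sq_nonneg _) (sq_nonneg _)
    (mul_sq_le_mul_sq_of_antitoneOn hy.le (hq.mono hsub) hu' hu_rep hu'_rep hu'₁ hu'₂)
end
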